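/- Let p ≥ 1, k > 0, let Λ be a p × p real diagonal matrix, Γ a p × p real orthogonal matrix, T a real p × (m − p) matrix and R = [1 | T]. Let W : ℝ → Matrix (Fin m) (Fin m) ℝ be continuous with W(t) positive semidefinite diagonal, and suppose ∫_{t₀}^{t₀+T₀} (Γᵀ ⬝ R ⬝ W(τ) ⬝ Rᵀ ⬝ Γ) dτ ≤ μ₂ • 1 in the Loewner order for all t₀ ≥ 0. Then the injection gain K(t) = −k • (Λ ⬝ Γᵀ ⬝ R ⬝ W(t)^{1/2}) satisfies, for all t₀ ≥ 0, ∫_{t₀}^{t₀+T₀} ‖K(τ)‖_F² dτ ≤ k²·‖Λ‖²·trace(∫_{t₀}^{t₀+T₀} Γᵀ R W(τ) Rᵀ Γ dτ) ≤ k²·‖Λ‖²·p·μ₂, where ‖·‖_F is the Frobenius norm, ‖Λ‖ the operator norm, and W(τ)^{1/2} the positive semidefinite square root of W(τ). -/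

import Mathlib

open MeasureTheory Matrix

/-- Entrywise interval integral of a matrix-valued function. -/
noncomputable def intMat {α β : Type*} (f : ℝ → Matrix α β ℝ) (a b : ℝ) : Matrix α β ℝ :=
  Matrix.of fun i j => ∫ τ in a..b, f τ i j

/-- Loewner order: `A ≤ B` iff `B - A` is positive semidefinite. -/
def loewnerLE {α : Type*} [Fintype α] (A B : Matrix α α ℝ) : Prop := (B - A).PosSemidef

/-- Euclidean norm of a vector. -/
noncomputable def euclNorm {α : Type*} [Fintype α] (v : α → ℝ) : ℝ :=
  Real.sqrt (∑ i, v i ^ 2)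

/-- Euclidean (ℓ²-ℓ²) operator norm of a matrix. -/
noncomputable def matOpNorm {α β : Type*} [Fintype α] [Fintype β] (A : Matrix α β ℝ) : ℝ :=
  sSup {r : ℝ | ∃ v : β → ℝ, euclNorm v ≤ 1 ∧ r = euclNorm (A.mulVec v)}

/-- Frobenius norm of a matrix. -/
noncomputable def frobNorm {α β : Type*} [Fintype α] [Fintype β] (A : Matrix α β ℝ) : ℝ :=
  Real.sqrt (∑ i, ∑ j, A i j ^ 2)

/-! Column by column, `‖Λ M‖_F ≤ ‖Λ‖ ‖M‖_F`, and for `M = Γᵀ R W^{1/2}` one has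
`‖M‖_F² = trace (M Mᵀ) = trace (Γᵀ R W Rᵀ Γ)`. Integrating this pointwise bound and commuting the
trace with the integral gives the first inequality; the second is the trace of the Loewner bound,
since `μ₂ • 1 - ∫ Γᵀ R W Rᵀ Γ` is positive semidefinite and so has nonnegative trace. The spectral
square root in the statement is the continuous functional calculus `CFC.sqrt`. -/

open scoped MatrixOrder

section Norms

variable {α β γ : Type*} [Fintype α] [Fintype β] [Fintype γ]

section L2Operator

open scoped Matrix.Norms.L2Operator

lemma euclNorm_eq_norm_toLp (v : α → ℝ) :
    euclNorm v = ‖(WithLp.toLp 2 v : EuclideanSpace ℝ α)‖ := by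
  simp [euclNorm, EuclideanSpace.norm_eq]

lemma matOpNorm_eq_l2_opNorm [DecidableEq β] (A : Matrix α β ℝ) : matOpNorm A = ‖A‖ := by
  rw [l2_opNorm_def, ← ContinuousLinearMap.sSup_unitClosedBall_eq_norm, matOpNorm]
  congr 1
  ext r
  simp only [euclNorm_eq_norm_toLp, Set.mem_ofPred_eq, Set.mem_image, Metric.mem_closedBall,
    dist_zero_right, eq_comm (a := r)]
  exact ⟨fun ⟨v, hv, hr⟩ => ⟨_, hv, hr⟩, fun ⟨x, hx, hr⟩ => ⟨x.ofLp, hx, hr⟩⟩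

lemma matOpNorm_nonneg (A : Matrix α β ℝ) : 0 ≤ matOpNorm A := by
  classical
  exact (matOpNorm_eq_l2_opNorm A).symm ▸ norm_nonneg A

end L2Operator

lemma euclNorm_mulVec_le (A : Matrix α β ℝ) (v : β → ℝ) :
    euclNorm (A *ᵥ v) ≤ matOpNorm A * euclNorm v := by
  classical
  open scoped Matrix.Norms.L2Operator in
  simpa [matOpNorm_eq_l2_opNorm, euclNorm_eq_norm_toLp] using A.l2_opNorm_mulVec (WithLp.toLp 2 v)

lemma frobNorm_nonneg (A : Matrix α β ℝ) : 0 ≤ frobNorm A := Real.sqrt_nonneg _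

lemma frobNorm_sq (A : Matrix α β ℝ) : frobNorm A ^ 2 = ∑ i, ∑ j, A i j ^ 2 :=
  Real.sq_sqrt <| by positivity

lemma frobNorm_sq_eq_sum_euclNorm_sq (A : Matrix α β ℝ) :
    frobNorm A ^ 2 = ∑ j, euclNorm (Aᵀ j) ^ 2 := by
  simp only [frobNorm_sq, euclNorm, Real.sq_sqrt (Finset.sum_nonneg fun _ _ => sq_nonneg _),
    transpose_apply]
  exact Finset.sum_comm

lemma frobNorm_sq_eq_trace_mul_transpose (A : Matrix α β ℝ) :
    frobNorm A ^ 2 = (A * Aᵀ).trace := by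
  rw [frobNorm_sq]
  simp [trace, mul_apply, sq]

lemma frobNorm_smul (c : ℝ) (A : Matrix α β ℝ) : frobNorm (c • A) = |c| * frobNorm A := by
  simp [frobNorm, mul_pow, ← Finset.mul_sum, Real.sqrt_mul (sq_nonneg c), Real.sqrt_sq_eq_abs]

lemma frobNorm_mul_le (A : Matrix α β ℝ) (B : Matrix β γ ℝ) :
    frobNorm (A * B) ≤ matOpNorm A * frobNorm B := by
  have hcol : ∀ j, (A * B)ᵀ j = A *ᵥ Bᵀ j := fun j => by
    ext i; simp [mul_apply, mulVec, dotProduct]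
  refine (pow_le_pow_iff_left₀ (frobNorm_nonneg _)
    (mul_nonneg (matOpNorm_nonneg A) (frobNorm_nonneg B)) two_ne_zero).mp ?_
  rw [mul_pow, frobNorm_sq_eq_sum_euclNorm_sq, frobNorm_sq_eq_sum_euclNorm_sq, Finset.mul_sum]
  gcongr with j
  rw [hcol, ← mul_pow]
  exact pow_le_pow_left₀ (Real.sqrt_nonneg _) (euclNorm_mulVec_le A _) 2

end Norms

section Trace

variable {α : Type*} [Fintype α]

lemma trace_intMat {f : ℝ → Matrix α α ℝ} (hf : Continuous f) (a b : ℝ) :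
    (intMat f a b).trace = ∫ τ in a..b, (f τ).trace := by
  simp only [trace, diag, intMat, of_apply]
  rw [intervalIntegral.integral_finsetSum]
  exact fun i _ => (hf.matrix_elem i i).intervalIntegrable a b

lemma trace_le_of_loewnerLE_smul_one [DecidableEq α] {A : Matrix α α ℝ} {c : ℝ}
    (h : loewnerLE A (c • 1)) : A.trace ≤ Fintype.card α * c := by
  have := h.trace_nonneg
  rw [trace_sub, trace_smul, trace_one, smul_eq_mul] at this
  linarith

end Trace

lemma Matrix.PosSemidef.eigenvectorUnitary_mul_diagonal_sqrt {n : Type*} [Fintype n] [DecidableEq n]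
    {A : Matrix n n ℝ} (hA : A.PosSemidef) :
    (hA.1.eigenvectorUnitary : Matrix n n ℝ) * diagonal (Real.sqrt ∘ hA.1.eigenvalues) *
      (star hA.1.eigenvectorUnitary : Matrix n n ℝ) = CFC.sqrt A := by
  have : 0 ≤ A := nonneg_iff_posSemidef.mpr hA
  rw [CFC.sqrt_eq_real_sqrt A, cfcₙ_eq_cfc, hA.1.cfc_eq, IsHermitian.cfc,
    Unitary.conjStarAlgAut_apply]
  rfl

lemma Matrix.sqrt_mul_transpose_sqrt {n : Type*} [Fintype n] [DecidableEq n] {A : Matrix n n ℝ}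
    (hA : 0 ≤ A) : CFC.sqrt A * (CFC.sqrt A)ᵀ = A := by
  rw [← conjTranspose_eq_transpose_of_trivial, ← star_eq_conjTranspose,
    (CFC.sqrt_nonneg A).isSelfAdjoint.star_eq, CFC.sqrt_mul_sqrt_self A]

lemma frobNorm_smul_mul_sqrt_sq_le {α β γ : Type*} [Fintype α] [Fintype β] [Fintype γ]
    [DecidableEq β] (c : ℝ) (Λ : Matrix γ α ℝ) (M : Matrix α β ℝ) {W : Matrix β β ℝ} (hW : 0 ≤ W) :
    frobNorm (c • (Λ * M * CFC.sqrt W)) ^ 2 ≤ c ^ 2 * matOpNorm Λ ^ 2 * (M * W * Mᵀ).trace :=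
  calc _ = c ^ 2 * frobNorm (Λ * (M * CFC.sqrt W)) ^ 2 := by
        rw [frobNorm_smul, mul_pow, sq_abs, Matrix.mul_assoc]
    _ ≤ c ^ 2 * (matOpNorm Λ * frobNorm (M * CFC.sqrt W)) ^ 2 := by
        gcongr
        exacts [frobNorm_nonneg _, frobNorm_mul_le _ _]
    _ = c ^ 2 * matOpNorm Λ ^ 2 * (M * W * Mᵀ).trace := by
        rw [mul_pow, frobNorm_sq_eq_trace_mul_transpose, ← mul_assoc, transpose_mul,
          Matrix.mul_assoc, ← Matrix.mul_assoc (CFC.sqrt W), Matrix.sqrt_mul_transpose_sqrt hW,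
          Matrix.mul_assoc]

lemma intervalIntegral.integral_mono_of_nonneg {f g : ℝ → ℝ} {a b : ℝ} (hab : a ≤ b)
    (hf : ∀ x, 0 ≤ f x) (hg : IntervalIntegrable g volume a b)
    (h : ∀ x, f x ≤ g x) : ∫ x in a..b, f x ≤ ∫ x in a..b, g x := by
  rw [intervalIntegral.integral_of_le hab, intervalIntegral.integral_of_le hab]
  exact MeasureTheory.integral_mono_of_nonneg (ae_of_all _ hf) hg.1 (ae_of_all _ h)

theorem stmt8_general (p q : ℕ) (k : ℝ)
    (Λ : Matrix (Fin p) (Fin p) ℝ)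
    (Γ : Matrix (Fin p) (Fin p) ℝ)
    (R : Matrix (Fin p) (Fin p ⊕ Fin q) ℝ)
    (W : ℝ → Matrix (Fin p ⊕ Fin q) (Fin p ⊕ Fin q) ℝ)
    (hWcont : Continuous W)
    (hWpsd : ∀ t, (W t).PosSemidef)
    (T₀ μ₂ : ℝ) (hT₀ : 0 < T₀)
    (hUB : ∀ t₀ : ℝ, 0 ≤ t₀ →
      loewnerLE (intMat (fun τ => Γᵀ * R * W τ * Rᵀ * Γ) t₀ (t₀ + T₀))
        (μ₂ • (1 : Matrix (Fin p) (Fin p) ℝ))) :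
    ∀ t₀ : ℝ, 0 ≤ t₀ →
      (∫ τ in t₀..(t₀ + T₀), frobNorm ((-k) • (Λ * Γᵀ * R * (((hWpsd τ).1.eigenvectorUnitary : Matrix (Fin p ⊕ Fin q) (Fin p ⊕ Fin q) ℝ) *
          Matrix.diagonal (Real.sqrt ∘ (hWpsd τ).1.eigenvalues) *
          (star (hWpsd τ).1.eigenvectorUnitary : Matrix (Fin p ⊕ Fin q) (Fin p ⊕ Fin q) ℝ)))) ^ 2) ≤
        k ^ 2 * matOpNorm Λ ^ 2 *
          Matrix.trace (intMat (fun τ => Γᵀ * R * W τ * Rᵀ * Γ) t₀ (t₀ + T₀)) ∧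
      k ^ 2 * matOpNorm Λ ^ 2 *
          Matrix.trace (intMat (fun τ => Γᵀ * R * W τ * Rᵀ * Γ) t₀ (t₀ + T₀)) ≤
        k ^ 2 * matOpNorm Λ ^ 2 * p * μ₂ := by
  intro t₀ ht₀
  set N := fun τ => Γᵀ * R * W τ * Rᵀ * Γ
  have hN : Continuous N := by fun_prop
  have hgain : ∀ τ, frobNorm ((-k) • (Λ * Γᵀ * R * CFC.sqrt (W τ))) ^ 2 ≤
      k ^ 2 * matOpNorm Λ ^ 2 * (N τ).trace := fun τ => by
    simpa only [neg_sq, N, transpose_mul, transpose_transpose, Matrix.mul_assoc] using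
      frobNorm_smul_mul_sqrt_sq_le (-k) Λ (Γᵀ * R) (nonneg_iff_posSemidef.mpr (hWpsd τ))
  refine ⟨?_, ?_⟩
  · calc _ ≤ ∫ τ in t₀..(t₀ + T₀), k ^ 2 * matOpNorm Λ ^ 2 * (N τ).trace := by
          refine intervalIntegral.integral_mono_of_nonneg (by linarith) (fun _ => sq_nonneg _)
            ((hN.matrix_trace.const_mul _).intervalIntegrable _ _) fun τ => ?_
          rw [(hWpsd τ).eigenvectorUnitary_mul_diagonal_sqrt]
          exact hgain τ
      _ = _ := by rw [intervalIntegral.integral_const_mul, trace_intMat hN]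
  · rw [mul_assoc _ (p : ℝ)]
    gcongr
    simpa using trace_le_of_loewnerLE_smul_one (hUB t₀ ht₀)

/-- Boundedness estimate on the output-injection gain `K(t) = -k Λ Γᵀ R W(t)^{1/2}`. -/
theorem stmt8 (p q : ℕ) (hp : 0 < p) (k : ℝ) (hk : 0 < k)
    (d : Fin p → ℝ)
    (Λ : Matrix (Fin p) (Fin p) ℝ) (hΛ : Λ = Matrix.diagonal d)
    (Γ : Matrix (Fin p) (Fin p) ℝ) (hΓ : Γᵀ * Γ = 1)
    (T : Matrix (Fin p) (Fin q) ℝ)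
    (R : Matrix (Fin p) (Fin p ⊕ Fin q) ℝ) (hR : R = Matrix.fromCols 1 T)
    (W : ℝ → Matrix (Fin p ⊕ Fin q) (Fin p ⊕ Fin q) ℝ)
    (hWcont : Continuous W)
    (hWdiag : ∀ t, (W t).IsDiag)
    (hWpsd : ∀ t, (W t).PosSemidef)
    (T₀ μ₂ : ℝ) (hT₀ : 0 < T₀) (hμ₂ : 0 < μ₂)
    (hUB : ∀ t₀ : ℝ, 0 ≤ t₀ →
      loewnerLE (intMat (fun τ => Γᵀ * R * W τ * Rᵀ * Γ) t₀ (t₀ + T₀))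
        (μ₂ • (1 : Matrix (Fin p) (Fin p) ℝ))) :
    ∀ t₀ : ℝ, 0 ≤ t₀ →
      (∫ τ in t₀..(t₀ + T₀), frobNorm ((-k) • (Λ * Γᵀ * R * (((hWpsd τ).1.eigenvectorUnitary : Matrix (Fin p ⊕ Fin q) (Fin p ⊕ Fin q) ℝ) *
          Matrix.diagonal (Real.sqrt ∘ (hWpsd τ).1.eigenvalues) *
          (star (hWpsd τ).1.eigenvectorUnitary : Matrix (Fin p ⊕ Fin q) (Fin p ⊕ Fin q) ℝ)))) ^ 2) ≤
        k ^ 2 * matOpNorm Λ ^ 2 *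
          Matrix.trace (intMat (fun τ => Γᵀ * R * W τ * Rᵀ * Γ) t₀ (t₀ + T₀)) ∧
      k ^ 2 * matOpNorm Λ ^ 2 *
          Matrix.trace (intMat (fun τ => Γᵀ * R * W τ * Rᵀ * Γ) t₀ (t₀ + T₀)) ≤
        k ^ 2 * matOpNorm Λ ^ 2 * p * μ₂ :=
  stmt8_general p q k Λ Γ R W hWcont hWpsd T₀ μ₂ hT₀ hUB
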